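/- arXiv:2408.06719 — 2 statements merged into one kernel-verified Lean document; each statement's English description precedes it below -/
import Mathlib

section
/- Let G be a (P_k + tP_2)-saturated graph with k ≥ 2 and t ≥ 1, let Q be a connected component of G, and let u, v be distinct vertices of Q with uv not an edge of G. Then at least one of the following holds: α'(Q) < α'(Q + uv); or Q contains a subgraph isomorphic to P_k and α_k(Q) < α_k(Q + uv); or Q contains no subgraph isomorphic to P_k and Q + uv contains a subgraph isomorphic to P_k. -/
open SimpleGraph

open SimpleGraph

/-- `H` has an (injective) copy inside `G`. -/
def ContainsCopy {α β : Type*} (H : SimpleGraph α) (G : SimpleGraph β) : Prop :=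
  ∃ f : α ↪ β, ∀ a b, H.Adj a b → G.Adj (f a) (f b)

/-- The graph obtained from `G` by adding the edge `uv`. -/
def addE {V : Type*} (G : SimpleGraph V) (u v : V) : SimpleGraph V :=
  G ⊔ SimpleGraph.fromEdgeSet {s(u, v)}

/-- `G` is `H`-saturated. -/
def IsSaturated {α β : Type*} (H : SimpleGraph α) (G : SimpleGraph β) : Prop :=
  ¬ ContainsCopy H G ∧ ∀ u v : β, u ≠ v → ¬ G.Adj u v → ContainsCopy H (addE G u v)

/-- The path `P_k` on `k` vertices. -/
def pathG (k : ℕ) : SimpleGraph (Fin k) where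
  Adj x y := x.val + 1 = y.val ∨ y.val + 1 = x.val
  symm := ⟨fun x y h => h.symm⟩
  loopless := ⟨fun x (h : x.val + 1 = x.val ∨ x.val + 1 = x.val) => by omega⟩

/-- `tP_2`: the disjoint union of `t` independent edges. -/
def tP2 (t : ℕ) : SimpleGraph (Fin t × Fin 2) where
  Adj x y := x.1 = y.1 ∧ x.2 ≠ y.2
  symm := ⟨fun x y h => ⟨h.1.symm, h.2.symm⟩⟩
  loopless := ⟨fun x h => h.2 rfl⟩

/-- Disjoint union of two graphs. -/
def disjSum {α β : Type*} (G : SimpleGraph α) (H : SimpleGraph β) :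
    SimpleGraph (α ⊕ β) where
  Adj x y := Sum.LiftRel G.Adj H.Adj x y
  symm := by
    constructor
    rintro x y (h | h)
    · exact Sum.LiftRel.inl h.symm
    · exact Sum.LiftRel.inr h.symm
  loopless := by
    constructor
    rintro x (h | h)
    · exact h.ne rfl
    · exact h.ne rfl

/-- The linear forest `P_k + tP_2`. -/
def PkPlustP2 (k t : ℕ) : SimpleGraph (Fin k ⊕ Fin t × Fin 2) :=
  disjSum (pathG k) (tP2 t)

/-- The saturation number `sat(n, H)`. -/
noncomputable def satNumber {α : Type*} (H : SimpleGraph α) (n : ℕ) : ℕ :=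
  sInf {m | ∃ G : SimpleGraph (Fin n), IsSaturated H G ∧ G.edgeSet.ncard = m}

/-- The matching number `α'(G)`. -/
noncomputable def matchNum {V : Type*} (G : SimpleGraph V) : ℕ :=
  sSup {m | ContainsCopy (tP2 m) G}

/-- `α_k(G)`: the largest `m` with `P_k + mP_2 ⊆ G`. -/
noncomputable def alphaK {V : Type*} (k : ℕ) (G : SimpleGraph V) : ℕ :=
  sSup {m | ContainsCopy (PkPlustP2 k m) G}

section Aux

open Function

lemma ContainsCopy.comp {α β γ : Type*} {A : SimpleGraph α} {B : SimpleGraph β}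
    {G : SimpleGraph γ} (h1 : ContainsCopy A B) (h2 : ContainsCopy B G) : ContainsCopy A G := by
  obtain ⟨f, hf⟩ := h1; obtain ⟨g, hg⟩ := h2
  exact ⟨f.trans g, fun a b h => hg _ _ (hf a b h)⟩

lemma containsCopy_card_le {α β : Type*} [Fintype α] [Fintype β] {H : SimpleGraph α}
    {G : SimpleGraph β} (h : ContainsCopy H G) : Fintype.card α ≤ Fintype.card β := by
  obtain ⟨f, _⟩ := h; exact Fintype.card_le_of_embedding f

lemma tP2_mono {m' m : ℕ} (h : m' ≤ m) : ContainsCopy (tP2 m') (tP2 m) := by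
  refine ⟨⟨fun p => (Fin.castLE h p.1, p.2), ?_⟩, ?_⟩
  · rintro ⟨a, x⟩ ⟨b, y⟩ hab
    simp only [Prod.mk.injEq] at hab
    exact Prod.ext (Fin.castLE_injective h hab.1) hab.2
  · rintro ⟨a, x⟩ ⟨b, y⟩ ⟨h1, h2⟩
    exact ⟨by subst h1; rfl, h2⟩

lemma PkP_mono {k m' m : ℕ} (h : m' ≤ m) : ContainsCopy (PkPlustP2 k m') (PkPlustP2 k m) := by
  refine ⟨⟨fun a => Sum.map id (fun p => (Fin.castLE h p.1, p.2)) a, ?_⟩, ?_⟩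
  · rintro (a | ⟨a, x⟩) (b | ⟨b, y⟩) hab
    · simpa using hab
    · simp at hab
    · simp at hab
    · simp only [Sum.map_inr, Sum.inr.injEq, Prod.mk.injEq] at hab
      simp [Prod.mk.injEq, Fin.castLE_injective h hab.1, hab.2]
  · rintro a b hab
    cases hab with
    | inl h1 => exact Sum.LiftRel.inl h1
    | inr h1 => exact Sum.LiftRel.inr ⟨congrArg (Fin.castLE h) h1.1, h1.2⟩

lemma pathG_copy_of_PkP {β : Type*} {k m : ℕ} {Q : SimpleGraph β}
    (h : ContainsCopy (PkPlustP2 k m) Q) : ContainsCopy (pathG k) Q := by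
  obtain ⟨f, hf⟩ := h
  exact ⟨⟨fun j => f (Sum.inl j), fun a b hab => by
      simpa using f.injective hab⟩,
    fun a b hab => hf _ _ (Sum.LiftRel.inl hab)⟩

lemma PkP0_of_pathG {β : Type*} {k : ℕ} {Q : SimpleGraph β}
    (h : ContainsCopy (pathG k) Q) : ContainsCopy (PkPlustP2 k 0) Q := by
  obtain ⟨f, hf⟩ := h
  refine ⟨⟨fun a => Sum.elim f (fun p => (p.1.elim0 : β)) a, ?_⟩, ?_⟩
  · rintro (a | ⟨a, x⟩) (b | ⟨b, y⟩) hab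
    · simpa using f.injective hab
    · exact b.elim0
    · exact a.elim0
    · exact a.elim0
  · rintro a b hab
    cases hab with
    | inl h1 => exact hf _ _ h1
    | inr h1 => exact (by exact ‹Fin 0 × Fin 2›.1.elim0)

lemma bddAbove_tP2 {β : Type*} [Fintype β] (Q : SimpleGraph β) :
    BddAbove {m | ContainsCopy (tP2 m) Q} := by
  refine ⟨Fintype.card β, fun m hm => ?_⟩
  have := containsCopy_card_le hm
  simp only [Fintype.card_prod, Fintype.card_fin] at this
  omega

lemma bddAbove_PkP {β : Type*} [Fintype β] (k : ℕ) (Q : SimpleGraph β) :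
    BddAbove {m | ContainsCopy (PkPlustP2 k m) Q} := by
  refine ⟨Fintype.card β, fun m hm => ?_⟩
  have := containsCopy_card_le hm
  simp only [Fintype.card_sum, Fintype.card_prod, Fintype.card_fin] at this
  omega

lemma sSup_lt_of_not_mem {S : Set ℕ} (hbdd : BddAbove S)
    (hdc : ∀ ⦃a b : ℕ⦄, a ≤ b → b ∈ S → a ∈ S) (h0 : (0:ℕ) ∈ S) {j : ℕ} (hj : j ∉ S) :
    sSup S < j := by
  by_contra hle
  push_neg at hle
  exact hj (hdc hle (Nat.sSup_mem ⟨0, h0⟩ hbdd))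

end Aux

lemma haddE {W : Type*} (H : SimpleGraph W) (a b x y : W) :
    (addE H a b).Adj x y ↔ H.Adj x y ∨ (s(x, y) = s(a, b) ∧ x ≠ y) := by
  simp [addE]

open Function in
lemma combine {V : Type*} {G : SimpleGraph V} (S : Set V) {k t : ℕ} (T : Finset (Fin t))
    (A : Fin k → V) (B : ↥T × Fin 2 → V) (D : {i : Fin t // i ∉ T} × Fin 2 → V)
    (hAinj : Injective A) (hBinj : Injective B) (hDinj : Injective D)
    (hAB : ∀ j p, A j ≠ B p) (hAD : ∀ j p, A j ≠ D p)
    (hBS : ∀ p, B p ∈ S) (hDS : ∀ p, D p ∉ S)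
    (hAadj : ∀ a b : Fin k, (pathG k).Adj a b → G.Adj (A a) (A b))
    (hBadj : ∀ i (x y : Fin 2), x ≠ y → G.Adj (B (i, x)) (B (i, y)))
    (hDadj : ∀ i (x y : Fin 2), x ≠ y → G.Adj (D (i, x)) (D (i, y))) :
    ContainsCopy (PkPlustP2 k t) G := by
  classical
  set F : Fin k ⊕ Fin t × Fin 2 → V := fun a =>
    Sum.elim A (fun p => if h : p.1 ∈ T then B (⟨p.1, h⟩, p.2) else D (⟨p.1, h⟩, p.2)) a
    with hF
  have hFinl : ∀ j, F (Sum.inl j) = A j := fun _ => rfl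
  have hFpos : ∀ (i : Fin t) (h : i ∈ T) (x : Fin 2), F (Sum.inr (i, x)) = B (⟨i, h⟩, x) := by
    intro i h x; simp [hF, dif_pos h]
  have hFneg : ∀ (i : Fin t) (h : i ∉ T) (x : Fin 2), F (Sum.inr (i, x)) = D (⟨i, h⟩, x) := by
    intro i h x; simp [hF, dif_neg h]
  refine ⟨⟨F, ?_⟩, ?_⟩
  · rintro (j | ⟨i, x⟩) (j' | ⟨i', y⟩) hab
    · exact congrArg Sum.inl (hAinj hab)
    · exfalso
      rw [hFinl] at hab
      by_cases h : i' ∈ T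
      · rw [hFpos i' h] at hab; exact hAB _ _ hab
      · rw [hFneg i' h] at hab; exact hAD _ _ hab
    · exfalso
      rw [hFinl] at hab
      by_cases h : i ∈ T
      · rw [hFpos i h] at hab; exact hAB _ _ hab.symm
      · rw [hFneg i h] at hab; exact hAD _ _ hab.symm
    · by_cases h : i ∈ T <;> by_cases h' : i' ∈ T
      · rw [hFpos i h, hFpos i' h'] at hab
        have := hBinj hab
        simp only [Prod.mk.injEq, Subtype.mk.injEq] at this
        simp [this.1, this.2]
      · rw [hFpos i h, hFneg i' h'] at hab
        exact absurd (hab ▸ hBS (⟨i, h⟩, x)) (hDS (⟨i', h'⟩, y))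
      · rw [hFneg i h, hFpos i' h'] at hab
        exact absurd (hab ▸ hDS (⟨i, h⟩, x)) (fun hc => hc (hBS (⟨i', h'⟩, y)))
      · rw [hFneg i h, hFneg i' h'] at hab
        have := hDinj hab
        simp only [Prod.mk.injEq, Subtype.mk.injEq] at this
        simp [this.1, this.2]
  · rintro (j | ⟨i, x⟩) (j' | ⟨i', y⟩) hab
    · have h1 : (pathG k).Adj j j' := by cases hab with | inl h1 => exact h1
      change G.Adj (F (Sum.inl j)) (F (Sum.inl j'))
      rw [hFinl, hFinl]; exact hAadj _ _ h1
    · cases hab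
    · cases hab
    · have h1 : i = i' ∧ x ≠ y := by cases hab with | inr h1 => exact h1
      obtain ⟨rfl, hxy⟩ := h1
      by_cases h : i ∈ T
      · change G.Adj (F (Sum.inr (i, x))) (F (Sum.inr (i, y)))
        rw [hFpos i h, hFpos i h]; exact hBadj _ _ _ hxy
      · change G.Adj (F (Sum.inr (i, x))) (F (Sum.inr (i, y)))
        rw [hFneg i h, hFneg i h]; exact hDadj _ _ _ hxy

theorem component_edge_addition {V : Type*} [Fintype V] (G : SimpleGraph V) (k t : ℕ)
    (hk : 2 ≤ k) (ht : 1 ≤ t) (hsat : IsSaturated (PkPlustP2 k t) G)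
    (C : G.ConnectedComponent) (u v : ↥C.supp) (huv : u ≠ v)
    (hnadj : ¬ G.Adj u.val v.val) :
    matchNum (G.induce C.supp) < matchNum (addE (G.induce C.supp) u v) ∨
    (ContainsCopy (pathG k) (G.induce C.supp) ∧
      alphaK k (G.induce C.supp) < alphaK k (addE (G.induce C.supp) u v)) ∨
    (¬ ContainsCopy (pathG k) (G.induce C.supp) ∧
      ContainsCopy (pathG k) (addE (G.induce C.supp) u v)) := by
  classical
  set Q := G.induce C.supp with hQ
  have hk0 : 0 < k := by omega
  have huv' : (u : V) ≠ (v : V) := Subtype.coe_injective.ne huv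
  obtain ⟨f, hf⟩ := hsat.2 u.val v.val huv' hnadj
  have hruv : G.Reachable (u : V) (v : V) := by
    have hu := (ConnectedComponent.mem_supp_iff _ _).mp u.2
    have hv := (ConnectedComponent.mem_supp_iff _ _).mp v.2
    exact ConnectedComponent.exact (hu.trans hv.symm)
  have hreach : ∀ x y : V, (addE G u.val v.val).Adj x y → G.Reachable x y := by
    intro x y hxy
    rcases (haddE G u.val v.val x y).mp hxy with h | ⟨h, _⟩
    · exact h.reachable
    · rcases Sym2.eq_iff.mp h with ⟨rfl, rfl⟩ | ⟨rfl, rfl⟩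
      · exact hruv
      · exact hruv.symm
  have hmemtr : ∀ x y : V, x ∈ C.supp → G.Reachable x y → y ∈ C.supp := by
    intro x y hx h
    rw [ConnectedComponent.mem_supp_iff] at hx ⊢
    rw [← hx]
    exact ConnectedComponent.sound h.symm
  have hPadj : ∀ a b : Fin k, (pathG k).Adj a b →
      (addE G u.val v.val).Adj (f (Sum.inl a)) (f (Sum.inl b)) :=
    fun a b h => hf _ _ (Sum.LiftRel.inl h)
  have hP2adj : ∀ (i : Fin t) (x y : Fin 2), x ≠ y →
      (addE G u.val v.val).Adj (f (Sum.inr (i, x))) (f (Sum.inr (i, y))) :=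
    fun i x y hxy => hf _ _ (Sum.LiftRel.inr ⟨rfl, hxy⟩)
  have hP2mem : ∀ (i : Fin t) (x y : Fin 2),
      f (Sum.inr (i, x)) ∈ C.supp → f (Sum.inr (i, y)) ∈ C.supp := by
    intro i x y hx
    by_cases hxy : x = y
    · exact hxy ▸ hx
    · exact hmemtr _ _ hx (hreach _ _ (hP2adj i x y hxy))
  have hkey : ∀ (n : ℕ) (hn : n < k),
      G.Reachable (f (Sum.inl ⟨0, hk0⟩)) (f (Sum.inl ⟨n, hn⟩)) := by
    intro n
    induction n with
    | zero => intro hn; exact Reachable.refl _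
    | succ n ih =>
      intro hn
      exact (ih (by omega)).trans
        (hreach _ _ (hPadj ⟨n, by omega⟩ ⟨n + 1, hn⟩ (Or.inl rfl)))
  have hPmem : ∀ j j' : Fin k, f (Sum.inl j) ∈ C.supp → f (Sum.inl j') ∈ C.supp := by
    intro j j' hj
    have h1 := hkey j.1 j.2
    have h2 := hkey j'.1 j'.2
    rw [Fin.eta] at h1 h2
    exact hmemtr _ _ hj (h1.symm.trans h2)
  set T : Finset (Fin t) := Finset.univ.filter (fun i => f (Sum.inr (i, 0)) ∈ C.supp) with hT
  have hTmem : ∀ (i : Fin t) (x : Fin 2), i ∈ T ↔ f (Sum.inr (i, x)) ∈ C.supp := by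
    intro i x
    simp only [hT, Finset.mem_filter, Finset.mem_univ, true_and]
    exact ⟨fun h => hP2mem i 0 x h, fun h => hP2mem i x 0 h⟩
  have hout : ∀ a b, (PkPlustP2 k t).Adj a b → f a ∉ C.supp → G.Adj (f a) (f b) := by
    intro a b hab ha
    rcases (haddE G u.val v.val _ _).mp (hf _ _ hab) with h | ⟨h, _⟩
    · exact h
    · exfalso
      rcases Sym2.eq_iff.mp h with ⟨h1, _⟩ | ⟨h1, _⟩
      · exact ha (by rw [h1]; exact u.2)
      · exact ha (by rw [h1]; exact v.2)
  have hin : ∀ (x y : V) (hxy : (addE G u.val v.val).Adj x y)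
      (hx : x ∈ C.supp) (hy : y ∈ C.supp),
      (addE Q u v).Adj ⟨x, hx⟩ ⟨y, hy⟩ := by
    intro x y hxy hx hy
    rw [haddE]
    rcases (haddE G u.val v.val x y).mp hxy with h | ⟨h, hne⟩
    · exact Or.inl (by rw [hQ]; simpa using h)
    · refine Or.inr ⟨?_, fun hc => hne (congrArg Subtype.val hc)⟩
      rcases Sym2.eq_iff.mp h with ⟨h1, h2⟩ | ⟨h1, h2⟩
      · exact Sym2.eq_iff.mpr (Or.inl ⟨Subtype.ext h1, Subtype.ext h2⟩)
      · exact Sym2.eq_iff.mpr (Or.inr ⟨Subtype.ext h1, Subtype.ext h2⟩)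
  have hDS : ∀ p : {i : Fin t // i ∉ T} × Fin 2, f (Sum.inr (p.1.1, p.2)) ∉ C.supp :=
    fun p hc => p.1.2 ((hTmem p.1.1 p.2).mpr hc)
  by_cases hpIn : f (Sum.inl ⟨0, hk0⟩) ∈ C.supp
  · -- the P_k part of the copy lies inside C
    have hmemP : ∀ j : Fin k, f (Sum.inl j) ∈ C.supp := fun j => hPmem _ j hpIn
    have insideCopy : ContainsCopy (PkPlustP2 k T.card) (addE Q u v) := by
      refine ⟨⟨fun a => Sum.elim
          (fun j => (⟨f (Sum.inl j), hmemP j⟩ : ↥C.supp))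
          (fun p => (⟨f (Sum.inr ((T.equivFin.symm p.1 : Fin t), p.2)),
            (hTmem _ p.2).mp (T.equivFin.symm p.1).2⟩ : ↥C.supp)) a, ?_⟩, ?_⟩
      · rintro (j | ⟨i, x⟩) (j' | ⟨i', y⟩) hab
        · exact congrArg Sum.inl (by simpa using f.injective (congrArg Subtype.val hab))
        · exact absurd (f.injective (congrArg Subtype.val hab)) (by simp)
        · exact absurd (f.injective (congrArg Subtype.val hab)) (by simp)
        · have h2 := f.injective (congrArg Subtype.val hab)
          simp only [Sum.inr.injEq, Prod.mk.injEq] at h2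
          have h3 : i = i' := T.equivFin.symm.injective (Subtype.coe_injective h2.1)
          simp [h3, h2.2]
      · rintro (j | ⟨i, x⟩) (j' | ⟨i', y⟩) hab
        · have h1 : (pathG k).Adj j j' := by cases hab with | inl h1 => exact h1
          exact hin _ _ (hPadj j j' h1) _ _
        · cases hab
        · cases hab
        · have h1 : i = i' ∧ x ≠ y := by cases hab with | inr h1 => exact h1
          obtain ⟨rfl, hxy⟩ := h1
          exact hin _ _ (hP2adj _ x y hxy) _ _
    have notQ : ¬ ContainsCopy (PkPlustP2 k T.card) Q := by
      rintro ⟨g, hg⟩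
      refine hsat.1 (combine C.supp T
        (fun j => (g (Sum.inl j) : V))
        (fun p => (g (Sum.inr (T.equivFin p.1, p.2)) : V))
        (fun p => f (Sum.inr (p.1.1, p.2)))
        ?_ ?_ ?_ ?_ ?_ (fun p => (g (Sum.inr (T.equivFin p.1, p.2))).2) hDS ?_ ?_ ?_)
      · intro a b hab
        simpa using g.injective (Subtype.coe_injective hab)
      · intro p q hpq
        have := g.injective (Subtype.coe_injective hpq)
        simp only [Sum.inr.injEq, Prod.mk.injEq] at this
        exact Prod.ext (T.equivFin.injective this.1) this.2
      · intro p q hpq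
        have := f.injective hpq
        simp only [Sum.inr.injEq, Prod.mk.injEq] at this
        exact Prod.ext (Subtype.ext this.1) this.2
      · intro j p hc
        exact absurd (g.injective (Subtype.coe_injective hc)) (by simp)
      · intro j p hc
        beta_reduce at hc
        exact hDS p (hc ▸ (g (Sum.inl j)).2)
      · intro a b hab
        have := hg _ _ (Sum.LiftRel.inl hab)
        rw [hQ] at this
        simpa using this
      · intro i x y hxy
        have := hg _ _ (Sum.LiftRel.inr
          (⟨rfl, hxy⟩ : (tP2 T.card).Adj (T.equivFin i, x) (T.equivFin i, y)))
        rw [hQ] at this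
        simpa using this
      · intro i x y hxy
        exact hout _ _ (Sum.LiftRel.inr ⟨rfl, hxy⟩) (hDS (i, x))
    by_cases hQP : ContainsCopy (pathG k) Q
    · refine Or.inr (Or.inl ⟨hQP, ?_⟩)
      have h1 : alphaK k Q < T.card := by
        unfold alphaK
        exact sSup_lt_of_not_mem (bddAbove_PkP k Q)
          (fun a b hab hb => (PkP_mono hab).comp hb) (PkP0_of_pathG hQP) notQ
      have h2 : (T.card : ℕ) ≤ alphaK k (addE Q u v) := by
        unfold alphaK
        exact le_csSup (bddAbove_PkP k _) insideCopy
      omega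
    · exact Or.inr (Or.inr ⟨hQP, pathG_copy_of_PkP insideCopy⟩)
  · -- the P_k part of the copy lies outside C
    have hmemP : ∀ j : Fin k, f (Sum.inl j) ∉ C.supp := fun j hj => hpIn (hPmem j _ hj)
    have insideCopy2 : ContainsCopy (tP2 T.card) (addE Q u v) := by
      refine ⟨⟨fun p => (⟨f (Sum.inr ((T.equivFin.symm p.1 : Fin t), p.2)),
          (hTmem _ p.2).mp (T.equivFin.symm p.1).2⟩ : ↥C.supp), ?_⟩, ?_⟩
      · rintro ⟨i, x⟩ ⟨i', y⟩ hab
        have h2 := f.injective (congrArg Subtype.val hab)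
        simp only [Sum.inr.injEq, Prod.mk.injEq] at h2
        have h3 : i = i' := T.equivFin.symm.injective (Subtype.coe_injective h2.1)
        simp [h3, h2.2]
      · rintro ⟨i, x⟩ ⟨i', y⟩ ⟨h1, hxy⟩
        obtain rfl : i = i' := h1
        exact hin _ _ (hP2adj _ x y hxy) _ _
    have notQ2 : ¬ ContainsCopy (tP2 T.card) Q := by
      rintro ⟨g, hg⟩
      refine hsat.1 (combine C.supp T
        (fun j => f (Sum.inl j))
        (fun p => (g (T.equivFin p.1, p.2) : V))
        (fun p => f (Sum.inr (p.1.1, p.2)))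
        ?_ ?_ ?_ ?_ ?_ (fun p => (g (T.equivFin p.1, p.2)).2) hDS ?_ ?_ ?_)
      · intro a b hab
        simpa using f.injective hab
      · intro p q hpq
        have := g.injective (Subtype.coe_injective hpq)
        simp only [Prod.mk.injEq] at this
        exact Prod.ext (T.equivFin.injective this.1) this.2
      · intro p q hpq
        have := f.injective hpq
        simp only [Sum.inr.injEq, Prod.mk.injEq] at this
        exact Prod.ext (Subtype.ext this.1) this.2
      · intro j p hc
        beta_reduce at hc
        exact hmemP j (by rw [hc]; exact (g (T.equivFin p.1, p.2)).2)
      · intro j p hc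
        exact absurd (f.injective hc) (by simp)
      · intro a b hab
        exact hout _ _ (Sum.LiftRel.inl hab) (hmemP a)
      · intro i x y hxy
        have := hg _ _ (⟨rfl, hxy⟩ : (tP2 T.card).Adj (T.equivFin i, x) (T.equivFin i, y))
        rw [hQ] at this
        simpa using this
      · intro i x y hxy
        exact hout _ _ (Sum.LiftRel.inr ⟨rfl, hxy⟩) (hDS (i, x))
    refine Or.inl ?_
    have h0 : ContainsCopy (tP2 0) Q :=
      ⟨⟨fun p => p.1.elim0, fun p => p.1.elim0⟩, fun p => p.1.elim0⟩
    have h1 : matchNum Q < T.card := by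
      unfold matchNum
      exact sSup_lt_of_not_mem (bddAbove_tP2 Q)
        (fun a b hab hb => (tP2_mono hab).comp hb) h0 notQ2
    have h2 : (T.card : ℕ) ≤ matchNum (addE Q u v) := by
      unfold matchNum
      exact le_csSup (bddAbove_tP2 _) insideCopy2
    omega
end

section
/- Let G be a (P_k + tP_2)-saturated graph with k ≥ 2 and t ≥ 1, let Q and Q_1 be two distinct connected components of G, and let u be a vertex of Q and v a vertex of Q_1. Then at least one of the following holds for the graph Q + Q_1 (the disjoint union of Q and Q_1): α'(Q + Q_1) < α'(Q + Q_1 + uv); or Q + Q_1 contains a subgraph isomorphic to P_k and α_k(Q + Q_1) < α_k(Q + Q_1 + uv); or Q + Q_1 contains no subgraph isomorphic to P_k and Q + Q_1 + uv contains a subgraph isomorphic to P_k. -/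
open SimpleGraph

open SimpleGraph

lemma addE_adj_iff {V : Type*} (G : SimpleGraph V) {u v : V} (huv : u ≠ v) (x y : V) :
    (addE G u v).Adj x y ↔ G.Adj x y ∨ (x = u ∧ y = v) ∨ (x = v ∧ y = u) := by
  simp only [addE, sup_adj, fromEdgeSet_adj, Set.mem_singleton_iff, Sym2.eq_iff]
  constructor
  · rintro (h | ⟨(⟨rfl, rfl⟩ | ⟨rfl, rfl⟩), hne⟩) <;> tauto
  · rintro (h | ⟨rfl, rfl⟩ | ⟨rfl, rfl⟩)
    · exact Or.inl h
    · exact Or.inr ⟨Or.inl ⟨rfl, rfl⟩, huv⟩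
    · exact Or.inr ⟨Or.inr ⟨rfl, rfl⟩, huv.symm⟩

lemma tP2_mono_s6 {V : Type*} {X : SimpleGraph V} {a m : ℕ} (h : a ≤ m)
    (hc : ContainsCopy (tP2 m) X) : ContainsCopy (tP2 a) X := by
  obtain ⟨f, hf⟩ := hc
  refine ⟨⟨fun p => f (p.1.castLE h, p.2), fun p q hpq => ?_⟩, fun p q hpq => hf _ _ ?_⟩
  · have := f.injective hpq
    simp only [Prod.mk.injEq] at this
    exact Prod.ext (Fin.castLE_injective h this.1) this.2
  · exact ⟨congrArg (Fin.castLE h) hpq.1, hpq.2⟩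

lemma PkPlus_mono {V : Type*} {X : SimpleGraph V} {k a m : ℕ} (h : a ≤ m)
    (hc : ContainsCopy (PkPlustP2 k m) X) : ContainsCopy (PkPlustP2 k a) X := by
  obtain ⟨f, hf⟩ := hc
  refine ⟨((Function.Embedding.refl _).sumMap
      ((Fin.castLEEmb h).prodMap (Function.Embedding.refl _))).trans f, fun p q hpq => hf _ _ ?_⟩
  rcases hpq with h' | h'
  · exact Sum.LiftRel.inl h'
  · exact Sum.LiftRel.inr ⟨congrArg (Fin.castLE h) h'.1, h'.2⟩

lemma bdd_tP2 {V : Type*} [Finite V] (X : SimpleGraph V) :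
    BddAbove {m | ContainsCopy (tP2 m) X} := by
  have := Fintype.ofFinite V
  refine ⟨Fintype.card V, fun m hm => ?_⟩
  obtain ⟨f, -⟩ := hm
  have := Fintype.card_le_of_embedding f
  simp only [Fintype.card_prod, Fintype.card_fin] at this
  omega

lemma bdd_PkPlus {V : Type*} [Finite V] (k : ℕ) (X : SimpleGraph V) :
    BddAbove {m | ContainsCopy (PkPlustP2 k m) X} := by
  have := Fintype.ofFinite V
  refine ⟨Fintype.card V, fun m hm => ?_⟩
  obtain ⟨f, -⟩ := hm
  have := Fintype.card_le_of_embedding f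
  simp only [Fintype.card_sum, Fintype.card_prod, Fintype.card_fin] at this
  omega

lemma zero_mem_tP2 {V : Type*} (X : SimpleGraph V) : ContainsCopy (tP2 0) X :=
  ⟨Function.Embedding.ofIsEmpty, fun a => isEmptyElim a⟩

lemma pk_to_PkPlus0 {V : Type*} {k : ℕ} {X : SimpleGraph V}
    (h : ContainsCopy (pathG k) X) : ContainsCopy (PkPlustP2 k 0) X := by
  obtain ⟨f, hf⟩ := h
  refine ⟨⟨fun x => match x with | .inl i => f i | .inr p => isEmptyElim p.1, ?_⟩, ?_⟩
  · rintro (x | x) (y | y) hxy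
    · exact congrArg Sum.inl (f.injective hxy)
    · exact isEmptyElim y.1
    · exact isEmptyElim x.1
    · exact isEmptyElim x.1
  · rintro (x | x) (y | y) hxy
    · cases hxy with
      | inl h' => exact hf _ _ h'
    · cases hxy
    · cases hxy
    · exact isEmptyElim x.1

theorem two_components_edge_addition {V : Type*} [Fintype V] (G : SimpleGraph V) (k t : ℕ)
    (hk : 2 ≤ k) (ht : 1 ≤ t) (hsat : IsSaturated (PkPlustP2 k t) G)
    (C C₁ : G.ConnectedComponent) (hCC : C ≠ C₁)
    (u v : V) (hu : u ∈ C.supp) (hv : v ∈ C₁.supp) :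
    matchNum (G.induce (C.supp ∪ C₁.supp)) <
      matchNum (addE (G.induce (C.supp ∪ C₁.supp))
        ⟨u, Set.mem_union_left _ hu⟩ ⟨v, Set.mem_union_right _ hv⟩) ∨
    (ContainsCopy (pathG k) (G.induce (C.supp ∪ C₁.supp)) ∧
      alphaK k (G.induce (C.supp ∪ C₁.supp)) <
        alphaK k (addE (G.induce (C.supp ∪ C₁.supp))
          ⟨u, Set.mem_union_left _ hu⟩ ⟨v, Set.mem_union_right _ hv⟩)) ∨
    (¬ ContainsCopy (pathG k) (G.induce (C.supp ∪ C₁.supp)) ∧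
      ContainsCopy (pathG k) (addE (G.induce (C.supp ∪ C₁.supp))
        ⟨u, Set.mem_union_left _ hu⟩ ⟨v, Set.mem_union_right _ hv⟩)) := by
  classical
  set S : Set V := C.supp ∪ C₁.supp with hSdef
  have huS : u ∈ S := Set.mem_union_left _ hu
  have hvS : v ∈ S := Set.mem_union_right _ hv
  have hu' : G.connectedComponentMk u = C := hu
  have hv' : G.connectedComponentMk v = C₁ := hv
  have huv : u ≠ v := by rintro rfl; exact hCC (hu'.symm.trans hv')
  have hnadj : ¬ G.Adj u v := by
    intro h
    exact hCC (hu'.symm.trans ((ConnectedComponent.sound h.reachable).trans hv'))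
  obtain ⟨f, hf⟩ := hsat.2 u v huv hnadj
  have hSmk : ∀ x y : V, G.connectedComponentMk x = G.connectedComponentMk y →
      (x ∈ S ↔ y ∈ S) := by
    intro x y hxy
    simp only [hSdef, Set.mem_union, ConnectedComponent.mem_supp_iff, hxy]
  have hmemS : ∀ x y : V, (addE G u v).Adj x y → (x ∈ S ↔ y ∈ S) := by
    intro x y hxy
    rw [addE_adj_iff G huv] at hxy
    rcases hxy with h | ⟨rfl, rfl⟩ | ⟨rfl, rfl⟩
    · exact hSmk _ _ (ConnectedComponent.sound h.reachable)
    · exact iff_of_true huS hvS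
    · exact iff_of_true hvS huS
  have hfS : ∀ p q, (PkPlustP2 k t).Adj p q → (f p ∈ S ↔ f q ∈ S) :=
    fun p q h => hmemS _ _ (hf p q h)
  have hpair : ∀ (j : Fin t) (b : Fin 2), f (.inr (j, b)) ∈ S ↔ f (.inr (j, 0)) ∈ S := by
    intro j b
    by_cases hb : b = 0
    · rw [hb]
    · have hb1 : b = 1 := by omega
      rw [hb1]
      exact hfS _ _ (Sum.LiftRel.inr ⟨rfl, show (1 : Fin 2) ≠ (0 : Fin 2) by decide⟩)
  have k0 : 0 < k := by omega
  have hpath : ∀ (n : ℕ) (hn : n < k), f (.inl ⟨n, hn⟩) ∈ S ↔ f (.inl ⟨0, k0⟩) ∈ S := by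
    intro n
    induction n with
    | zero => intro _; exact Iff.rfl
    | succ m ih =>
      intro hn
      have hm : m < k := Nat.lt_of_succ_lt hn
      have hadjp : (PkPlustP2 k t).Adj (.inl ⟨m, hm⟩) (.inl ⟨m + 1, hn⟩) :=
        Sum.LiftRel.inl (Or.inl rfl)
      exact (hfS _ _ hadjp).symm.trans (ih hm)
  set A : Set (Fin t) := {j | f (.inr (j, (0 : Fin 2))) ∈ S} with hAdef
  haveI fA : Fintype A := Fintype.ofFinite _
  set a : ℕ := Fintype.card A with hadef
  let eA : A ≃ Fin a := Fintype.equivFin A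
  have huvS : (⟨u, huS⟩ : S) ≠ ⟨v, hvS⟩ := fun h => huv (congrArg Subtype.val h)
  have hto : ∀ (x y : V) (hx : x ∈ S) (hy : y ∈ S), (addE G u v).Adj x y →
      (addE (G.induce S) ⟨u, huS⟩ ⟨v, hvS⟩).Adj ⟨x, hx⟩ ⟨y, hy⟩ := by
    intro x y hx hy hxy
    rw [addE_adj_iff G huv] at hxy
    rw [addE_adj_iff _ huvS]
    rcases hxy with h | ⟨rfl, rfl⟩ | ⟨rfl, rfl⟩
    · exact Or.inl h
    · exact Or.inr (Or.inl ⟨rfl, rfl⟩)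
    · exact Or.inr (Or.inr ⟨rfl, rfl⟩)
  have hHG : ∀ (x y : S), (G.induce S).Adj x y → G.Adj x.1 y.1 := fun x y h => h
  by_contra hcon
  push_neg at hcon
  obtain ⟨h1, h2, h3⟩ := hcon
  by_cases hcase : f (.inl ⟨0, k0⟩) ∈ S
  · -- the path lies inside S
    have hpS : ∀ i : Fin k, f (.inl i) ∈ S := fun i => (hpath i.1 i.2).mpr hcase
    -- copy of P_k + aP_2 in H'
    have e2 : ContainsCopy (PkPlustP2 k a) (addE (G.induce S) ⟨u, huS⟩ ⟨v, hvS⟩) := by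
      refine ⟨⟨fun x => Sum.elim (fun i => (⟨f (.inl i), hpS i⟩ : S))
        (fun pb => (⟨f (.inr ((eA.symm pb.1).1, pb.2)),
          (hpair _ pb.2).mpr (eA.symm pb.1).2⟩ : S)) x, ?_⟩, ?_⟩
      · rintro (x | ⟨p, b⟩) (y | ⟨q, c⟩) hxy
        · exact congrArg Sum.inl (Sum.inl.inj (f.injective (congrArg Subtype.val hxy)))
        · exact absurd (f.injective (congrArg Subtype.val hxy)) (by simp)
        · exact absurd (f.injective (congrArg Subtype.val hxy)) (by simp)
        · have h' := Sum.inr.inj (f.injective (congrArg Subtype.val hxy))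
          rw [Prod.mk.injEq] at h'
          have hpq : p = q := eA.symm.injective (Subtype.ext h'.1)
          have hbc : b = c := h'.2
          rw [hpq, hbc]
      · rintro (x | ⟨p, b⟩) (y | ⟨q, c⟩) hxy
        · cases hxy with
          | inl h' => exact hto _ _ _ _ (hf _ _ (Sum.LiftRel.inl h'))
        · cases hxy
        · cases hxy
        · cases hxy with
          | inr h' =>
            obtain ⟨hpq0, hbc0⟩ := h'
            have hpq : p = q := hpq0
            have hbc : b ≠ c := hbc0
            subst hpq
            exact hto _ _ _ _ (hf _ _ (Sum.LiftRel.inr ⟨rfl, hbc⟩))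
    have hpkH' : ContainsCopy (pathG k) (addE (G.induce S) ⟨u, huS⟩ ⟨v, hvS⟩) := by
      refine ⟨⟨fun i => (⟨f (.inl i), hpS i⟩ : S), ?_⟩, ?_⟩
      · intro x y hxy
        exact Sum.inl.inj (f.injective (congrArg Subtype.val hxy))
      · intro x y hxy
        exact hto _ _ _ _ (hf _ _ (Sum.LiftRel.inl hxy))
    by_cases hPk : ContainsCopy (pathG k) (G.induce S)
    · have hle : alphaK k (addE (G.induce S) ⟨u, huS⟩ ⟨v, hvS⟩) ≤ alphaK k (G.induce S) :=
        h2 hPk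
      unfold alphaK at hle
      have hbdd' := bdd_PkPlus k (addE (G.induce S) ⟨u, huS⟩ ⟨v, hvS⟩)
      have hbdd := bdd_PkPlus k (G.induce S)
      have hmem : sSup {m | ContainsCopy (PkPlustP2 k m) (G.induce S)} ∈
          {m | ContainsCopy (PkPlustP2 k m) (G.induce S)} :=
        Nat.sSup_mem ⟨0, pk_to_PkPlus0 hPk⟩ hbdd
      have hacopy : ContainsCopy (PkPlustP2 k a) (G.induce S) :=
        PkPlus_mono (le_trans (le_csSup hbdd' e2) hle) hmem
      obtain ⟨g, hg⟩ := hacopy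
      refine hsat.1 ⟨⟨fun x => Sum.elim (fun i => (g (.inl i)).1)
        (fun jb => if hj : jb.1 ∈ A then (g (.inr (eA ⟨jb.1, hj⟩, jb.2))).1
          else f (.inr jb)) x, ?_⟩, ?_⟩
      · have hval : ∀ (j : Fin t) (b : Fin 2), j ∉ A → f (.inr (j, b)) ∉ S :=
          fun j b hj h => hj ((hpair j b).mp h)
        rintro (x | ⟨p, b⟩) (y | ⟨q, c⟩) hxy <;> simp only [Sum.elim_inl, Sum.elim_inr] at hxy
        · exact congrArg Sum.inl (Sum.inl.inj (g.injective (Subtype.ext hxy)))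
        · by_cases hq : q ∈ A
          · rw [dif_pos hq] at hxy
            exact absurd (g.injective (Subtype.ext hxy)) (by simp)
          · rw [dif_neg hq] at hxy
            exact absurd (hxy ▸ (g (.inl x)).2) (hval q c hq)
        · by_cases hp : p ∈ A
          · rw [dif_pos hp] at hxy
            exact absurd (g.injective (Subtype.ext hxy)) (by simp)
          · rw [dif_neg hp] at hxy
            exact absurd (hxy.symm ▸ (g (.inl y)).2) (hval p b hp)
        · by_cases hp : p ∈ A <;> by_cases hq : q ∈ A
          · rw [dif_pos hp, dif_pos hq] at hxy
            have h' := Sum.inr.inj (g.injective (Subtype.ext hxy))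
            rw [Prod.mk.injEq] at h'
            have : (⟨p, hp⟩ : A) = ⟨q, hq⟩ := eA.injective h'.1
            rw [Subtype.mk.injEq] at this
            have hbc : b = c := h'.2
            rw [this, hbc]
          · rw [dif_pos hp, dif_neg hq] at hxy
            exact absurd (hxy ▸ (g (.inr (eA ⟨p, hp⟩, b))).2) (hval q c hq)
          · rw [dif_neg hp, dif_pos hq] at hxy
            exact absurd (hxy.symm ▸ (g (.inr (eA ⟨q, hq⟩, c))).2) (hval p b hp)
          · rw [dif_neg hp, dif_neg hq] at hxy
            exact f.injective hxy
      · rintro (x | ⟨p, b⟩) (y | ⟨q, c⟩) hxy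
        · cases hxy with
          | inl h' =>
            exact hHG _ _ (hg _ _ (Sum.LiftRel.inl h'))
        · cases hxy
        · cases hxy
        · cases hxy with
          | inr h' =>
            obtain ⟨hpq0, hbc0⟩ := h'
            have hpq : p = q := hpq0
            have hbc : b ≠ c := hbc0
            subst hpq
            show G.Adj (if hj : p ∈ A then (g (.inr (eA ⟨p, hj⟩, b))).1 else f (.inr (p, b))) (if hj : p ∈ A then (g (.inr (eA ⟨p, hj⟩, c))).1 else f (.inr (p, c)))
            by_cases hp : p ∈ A
            · rw [dif_pos hp, dif_pos hp]
              exact hHG _ _ (hg _ _ (Sum.LiftRel.inr ⟨rfl, hbc⟩))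
            · rw [dif_neg hp, dif_neg hp]
              have h'' := hf _ _ (Sum.LiftRel.inr (⟨rfl, hbc⟩ :
                (tP2 t).Adj (p, b) (p, c)))
              rw [addE_adj_iff G huv] at h''
              rcases h'' with h'' | ⟨he, _⟩ | ⟨he, _⟩
              · exact h''
              · exact absurd (he ▸ huS) (fun h => hp ((hpair p b).mp h))
              · exact absurd (he ▸ hvS) (fun h => hp ((hpair p b).mp h))
    · exact h3 hPk hpkH'
  · -- the path lies outside S
    have hpnS : ∀ i : Fin k, f (.inl i) ∉ S := fun i h => hcase ((hpath i.1 i.2).mp h)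
    have e1 : ContainsCopy (tP2 a) (addE (G.induce S) ⟨u, huS⟩ ⟨v, hvS⟩) := by
      refine ⟨⟨fun pb => (⟨f (.inr ((eA.symm pb.1).1, pb.2)),
        (hpair _ pb.2).mpr (eA.symm pb.1).2⟩ : S), ?_⟩, ?_⟩
      · rintro ⟨p, b⟩ ⟨q, c⟩ hxy
        have h' := Sum.inr.inj (f.injective (congrArg Subtype.val hxy))
        rw [Prod.mk.injEq] at h'
        have hpq : p = q := eA.symm.injective (Subtype.ext h'.1)
        have hbc : b = c := h'.2
        rw [hpq, hbc]
      · rintro ⟨p, b⟩ ⟨q, c⟩ hxy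
        obtain ⟨hpq0, hbc0⟩ := hxy
        have hpq : p = q := hpq0
        have hbc : b ≠ c := hbc0
        subst hpq
        exact hto _ _ _ _ (hf _ _ (Sum.LiftRel.inr ⟨rfl, hbc⟩))
    have hle : matchNum (addE (G.induce S) ⟨u, huS⟩ ⟨v, hvS⟩) ≤ matchNum (G.induce S) := h1
    unfold matchNum at hle
    have hbdd' := bdd_tP2 (addE (G.induce S) ⟨u, huS⟩ ⟨v, hvS⟩)
    have hbdd := bdd_tP2 (G.induce S)
    have hmem : sSup {m | ContainsCopy (tP2 m) (G.induce S)} ∈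
        {m | ContainsCopy (tP2 m) (G.induce S)} :=
      Nat.sSup_mem ⟨0, zero_mem_tP2 _⟩ hbdd
    have hacopy : ContainsCopy (tP2 a) (G.induce S) :=
      tP2_mono_s6 (le_trans (le_csSup hbdd' e1) hle) hmem
    obtain ⟨g, hg⟩ := hacopy
    refine hsat.1 ⟨⟨fun x => Sum.elim (fun i => f (.inl i))
      (fun jb => if hj : jb.1 ∈ A then (g (eA ⟨jb.1, hj⟩, jb.2)).1
        else f (.inr jb)) x, ?_⟩, ?_⟩
    · have hval : ∀ (j : Fin t) (b : Fin 2), j ∉ A → f (.inr (j, b)) ∉ S :=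
        fun j b hj h => hj ((hpair j b).mp h)
      rintro (x | ⟨p, b⟩) (y | ⟨q, c⟩) hxy <;> simp only [Sum.elim_inl, Sum.elim_inr] at hxy
      · exact congrArg Sum.inl (Sum.inl.inj (f.injective hxy))
      · by_cases hq : q ∈ A
        · rw [dif_pos hq] at hxy
          exact absurd (hxy ▸ (g (eA ⟨q, hq⟩, c)).2) (hpnS x)
        · rw [dif_neg hq] at hxy
          exact absurd (f.injective hxy) (by simp)
      · by_cases hp : p ∈ A
        · rw [dif_pos hp] at hxy
          exact absurd (hxy.symm ▸ (g (eA ⟨p, hp⟩, b)).2) (hpnS y)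
        · rw [dif_neg hp] at hxy
          exact absurd (f.injective hxy) (by simp)
      · by_cases hp : p ∈ A <;> by_cases hq : q ∈ A
        · rw [dif_pos hp, dif_pos hq] at hxy
          have h' := g.injective (Subtype.ext hxy)
          rw [Prod.mk.injEq] at h'
          have : (⟨p, hp⟩ : A) = ⟨q, hq⟩ := eA.injective h'.1
          rw [Subtype.mk.injEq] at this
          have hbc : b = c := h'.2
          rw [this, hbc]
        · rw [dif_pos hp, dif_neg hq] at hxy
          exact absurd (hxy ▸ (g (eA ⟨p, hp⟩, b)).2) (hval q c hq)
        · rw [dif_neg hp, dif_pos hq] at hxy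
          exact absurd (hxy.symm ▸ (g (eA ⟨q, hq⟩, c)).2) (hval p b hp)
        · rw [dif_neg hp, dif_neg hq] at hxy
          exact f.injective hxy
    · rintro (x | ⟨p, b⟩) (y | ⟨q, c⟩) hxy
      · cases hxy with
        | inl h' =>
          have h'' := hf _ _ (Sum.LiftRel.inl h')
          rw [addE_adj_iff G huv] at h''
          rcases h'' with h'' | ⟨he, _⟩ | ⟨he, _⟩
          · exact h''
          · exact absurd (he ▸ huS) (hpnS x)
          · exact absurd (he ▸ hvS) (hpnS x)
      · cases hxy
      · cases hxy
      · cases hxy with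
        | inr h' =>
          obtain ⟨hpq0, hbc0⟩ := h'
          have hpq : p = q := hpq0
          have hbc : b ≠ c := hbc0
          subst hpq
          show G.Adj (if hj : p ∈ A then (g (eA ⟨p, hj⟩, b)).1 else f (.inr (p, b))) (if hj : p ∈ A then (g (eA ⟨p, hj⟩, c)).1 else f (.inr (p, c)))
          by_cases hp : p ∈ A
          · rw [dif_pos hp, dif_pos hp]
            exact hHG _ _ (hg _ _ (⟨rfl, hbc⟩ : (tP2 a).Adj (eA ⟨p, hp⟩, b) (eA ⟨p, hp⟩, c)))
          · rw [dif_neg hp, dif_neg hp]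
            have h'' := hf _ _ (Sum.LiftRel.inr (⟨rfl, hbc⟩ : (tP2 t).Adj (p, b) (p, c)))
            rw [addE_adj_iff G huv] at h''
            rcases h'' with h'' | ⟨he, _⟩ | ⟨he, _⟩
            · exact h''
            · exact absurd (he ▸ huS) (fun h => hp ((hpair p b).mp h))
            · exact absurd (he ▸ hvS) (fun h => hp ((hpair p b).mp h))
end
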